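/- arXiv:math/9905012 — 3 statements merged into one kernel-verified Lean document; each statement's English description precedes it below -/
import Mathlib

section
/- There is no tiling of a 6×n rectangle by T tetrominoes for any positive integer n. -/
/-- Translate a set of cells by a vector. -/
def translateBy (v : ℤ × ℤ) (s : Finset (ℤ × ℤ)) : Finset (ℤ × ℤ) :=
  s.image (fun p => (p.1 + v.1, p.2 + v.2))

/-- The cells of a `w × h` rectangle: `[0,w) × [0,h) ∩ ℤ²`
(first coordinate is horizontal). -/
noncomputable def Rect (w h : ℕ) : Finset (ℤ × ℤ) :=
  Finset.Ico (0 : ℤ) (w : ℤ) ×ˢ Finset.Ico (0 : ℤ) (h : ℤ)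

/-- Rotation by 90 degrees. -/
def rot90 (p : ℤ × ℤ) : ℤ × ℤ := (-p.2, p.1)

/-- The four rotations of a base shape. -/
def rotationsOf (base : Finset (ℤ × ℤ)) : Finset (Finset (ℤ × ℤ)) :=
  {base, base.image rot90, (base.image rot90).image rot90,
   ((base.image rot90).image rot90).image rot90}

/-- `T` is a tiling of the region `R` by translated copies of the given shapes:
its members are placed tiles, pairwise disjoint, whose union is `R`. -/
def IsTiling (shapes : Finset (Finset (ℤ × ℤ))) (R : Finset (ℤ × ℤ))
    (T : Finset (Finset (ℤ × ℤ))) : Prop :=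
  (∀ P ∈ T, ∃ s ∈ shapes, ∃ v : ℤ × ℤ, P = translateBy v s) ∧
  (∀ P ∈ T, ∀ Q ∈ T, P ≠ Q → Disjoint P Q) ∧
  T.biUnion id = R

/-- The T tetromino and its rotations. -/
def Tshapes : Finset (Finset (ℤ × ℤ)) :=
  rotationsOf {((0, 0) : ℤ × ℤ), (1, 0), (2, 0), (1, 1)}

/-!
The first two columns already cannot be tiled. The tile at the corner `(0, 0)` is either the bar
`barUp 0 0` or the stem `stemRight 0 0`. From then on, each cell of the two columns taken in turn
admits only one or two placed tetrominoes that stay in the strip and avoid the tiles found so far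
(a finite list, computed by `decide`). The bar forces `stemRight 0 1` and `barDown 0 5`, leaving
`(0, 4)` uncoverable; the stem forces, up to one dead end, `stemRight 0 3`, `barUp 1 0`,
`barDown 1 5` and `barUp 1 2`, which enclose the cell `(1, 3)`.
-/

def placementsThrough (shapes : Finset (Finset (ℤ × ℤ))) (c : ℤ × ℤ) :
    Finset (Finset (ℤ × ℤ)) :=
  shapes.biUnion fun s => s.image fun p => translateBy (c.1 - p.1, c.2 - p.2) s

/-- The translates of the shapes through `c` that stay in the half-strip `[0, ∞) × [0, h)` and
overlap no tile of `F` other than themselves. -/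
def candidates (shapes : Finset (Finset (ℤ × ℤ))) (h : ℕ) (F : Finset (Finset (ℤ × ℤ)))
    (c : ℤ × ℤ) : Finset (Finset (ℤ × ℤ)) :=
  (placementsThrough shapes c).filter fun P =>
    (∀ p ∈ P, 0 ≤ p.1 ∧ 0 ≤ p.2 ∧ p.2 < h) ∧ ∀ Q ∈ F, P = Q ∨ Disjoint P Q

lemma mem_Rect {w h : ℕ} {p : ℤ × ℤ} :
    p ∈ Rect w h ↔ 0 ≤ p.1 ∧ p.1 < w ∧ 0 ≤ p.2 ∧ p.2 < h := by
  simp [Rect, and_assoc]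

lemma translateBy_mem_placementsThrough {shapes : Finset (Finset (ℤ × ℤ))}
    {s : Finset (ℤ × ℤ)} (hs : s ∈ shapes) {v c : ℤ × ℤ} (hc : c ∈ translateBy v s) :
    translateBy v s ∈ placementsThrough shapes c := by
  obtain ⟨p, hp, rfl⟩ := Finset.mem_image.1 hc
  exact Finset.mem_biUnion.2 ⟨s, hs, Finset.mem_image.2 ⟨p, hp, by simp⟩⟩

namespace IsTiling

variable {shapes : Finset (Finset (ℤ × ℤ))} {R : Finset (ℤ × ℤ)} {T : Finset (Finset (ℤ × ℤ))}

lemma subset (hT : IsTiling shapes R T) {P : Finset (ℤ × ℤ)} (hP : P ∈ T) : P ⊆ R := by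
  rw [← hT.2.2]
  exact Finset.subset_biUnion_of_mem id hP

lemma exists_mem_of_mem (hT : IsTiling shapes R T) {c : ℤ × ℤ} (hc : c ∈ R) :
    ∃ P ∈ T, c ∈ P := by
  rw [← hT.2.2] at hc
  simpa using hc

variable {w h : ℕ}

lemma exists_mem_candidates (hT : IsTiling shapes (Rect w h) T) (c : ℤ × ℤ)
    (F : Finset (Finset (ℤ × ℤ))) (hF : F ⊆ T) (hc : c ∈ Rect w h) :
    ∃ P ∈ T, P ∈ candidates shapes h F c := by
  obtain ⟨P, hPT, hcP⟩ := hT.exists_mem_of_mem hc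
  obtain ⟨s, hs, v, rfl⟩ := hT.1 P hPT
  refine ⟨_, hPT, Finset.mem_filter.2 ⟨translateBy_mem_placementsThrough hs hcP, ?_, ?_⟩⟩
  · intro p hp
    have := mem_Rect.1 (hT.subset hPT hp)
    omega
  · intro Q hQ
    by_cases hPQ : translateBy v s = Q
    · exact Or.inl hPQ
    · exact Or.inr (hT.2.1 _ hPT Q (hF hQ) hPQ)

lemma candidates_ne_empty (hT : IsTiling shapes (Rect w h) T) (c : ℤ × ℤ)
    (F : Finset (Finset (ℤ × ℤ))) (hF : F ⊆ T) (hc : c ∈ Rect w h) :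
    candidates shapes h F c ≠ ∅ := by
  obtain ⟨P, -, hP⟩ := hT.exists_mem_candidates c F hF hc
  exact Finset.ne_empty_of_mem hP

lemma mem_of_candidates_eq_singleton (hT : IsTiling shapes (Rect w h) T) (c : ℤ × ℤ)
    (F : Finset (Finset (ℤ × ℤ))) (hF : F ⊆ T) (hc : c ∈ Rect w h)
    {P : Finset (ℤ × ℤ)} (hP : candidates shapes h F c = {P}) : P ∈ T := by
  obtain ⟨P', hP'T, hP'⟩ := hT.exists_mem_candidates c F hF hc
  rw [hP, Finset.mem_singleton] at hP'
  rwa [← hP']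

lemma mem_or_mem_of_candidates_eq_pair (hT : IsTiling shapes (Rect w h) T) (c : ℤ × ℤ)
    (F : Finset (Finset (ℤ × ℤ))) (hF : F ⊆ T) (hc : c ∈ Rect w h)
    {P Q : Finset (ℤ × ℤ)} (hPQ : candidates shapes h F c = {P, Q}) : P ∈ T ∨ Q ∈ T := by
  obtain ⟨P', hP'T, hP'⟩ := hT.exists_mem_candidates c F hF hc
  rw [hPQ, Finset.mem_insert, Finset.mem_singleton] at hP'
  rcases hP' with rfl | rfl
  exacts [Or.inl hP'T, Or.inr hP'T]

end IsTiling

def barUp (x y : ℤ) : Finset (ℤ × ℤ) := {(x, y), (x + 1, y), (x + 2, y), (x + 1, y + 1)}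

def barDown (x y : ℤ) : Finset (ℤ × ℤ) := {(x, y), (x + 1, y), (x + 2, y), (x + 1, y - 1)}

def stemRight (x y : ℤ) : Finset (ℤ × ℤ) := {(x, y), (x, y + 1), (x, y + 2), (x + 1, y + 1)}

section LeftColumn

variable {n : ℕ} {T : Finset (Finset (ℤ × ℤ))}

lemma false_of_barUp_mem (hT : IsTiling Tshapes (Rect n 6) T) (hn : 0 < n)
    (hbar : barUp 0 0 ∈ T) : False := by
  have hstem : stemRight 0 1 ∈ T :=
    hT.mem_of_candidates_eq_singleton (0, 1) {barUp 0 0} (by simpa) (mem_Rect.2 (by omega))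
      (by decide)
  have htop : barDown 0 5 ∈ T :=
    hT.mem_of_candidates_eq_singleton (0, 5) {stemRight 0 1} (by simpa) (mem_Rect.2 (by omega))
      (by decide)
  exact hT.candidates_ne_empty (0, 4) {stemRight 0 1, barDown 0 5}
    (by simp [Finset.insert_subset_iff, hstem, htop]) (mem_Rect.2 (by omega)) (by decide)

lemma false_of_stemRight_mem (hT : IsTiling Tshapes (Rect n 6) T)
    (hstem : stemRight 0 0 ∈ T) : False := by
  have hn : 1 < n := by
    have := mem_Rect.1 (hT.subset hstem (by decide : ((1 : ℤ), (1 : ℤ)) ∈ stemRight 0 0))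
    omega
  rcases hT.mem_or_mem_of_candidates_eq_pair (0, 5) {stemRight 0 0} (by simpa)
    (mem_Rect.2 (by omega)) (P := barDown 0 5) (Q := stemRight 0 3) (by decide) with htop | htop
  · exact hT.candidates_ne_empty (0, 4) {stemRight 0 0, barDown 0 5}
      (by simp [Finset.insert_subset_iff, hstem, htop]) (mem_Rect.2 (by omega)) (by decide)
  have hlow : barUp 1 0 ∈ T :=
    hT.mem_of_candidates_eq_singleton (1, 0) {stemRight 0 0} (by simpa) (mem_Rect.2 (by omega))
      (by decide)
  have hhigh : barDown 1 5 ∈ T :=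
    hT.mem_of_candidates_eq_singleton (1, 5) {stemRight 0 3} (by simpa) (mem_Rect.2 (by omega))
      (by decide)
  have hmid : barUp 1 2 ∈ T :=
    hT.mem_of_candidates_eq_singleton (1, 2) {stemRight 0 0, stemRight 0 3, barUp 1 0}
      (by simp [Finset.insert_subset_iff, hstem, htop, hlow]) (mem_Rect.2 (by omega)) (by decide)
  exact hT.candidates_ne_empty (1, 3) {stemRight 0 3, barDown 1 5, barUp 1 2}
    (by simp [Finset.insert_subset_iff, htop, hhigh, hmid]) (mem_Rect.2 (by omega)) (by decide)

end LeftColumn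

/-- no tiling of a 6×n rectangle by T tetrominoes. -/
theorem t_tetromino_6xn_no_tiling (n : ℕ) (hn : 0 < n) :
    ¬ ∃ T, IsTiling Tshapes (Rect n 6) T := by
  rintro ⟨T, hT⟩
  rcases hT.mem_or_mem_of_candidates_eq_pair (0, 0) ∅ (Finset.empty_subset T)
    (mem_Rect.2 (by omega)) (P := barUp 0 0) (Q := stemRight 0 0) (by decide) with hbar | hstem
  exacts [false_of_barUp_mem hT hn hbar, false_of_stemRight_mem hT hstem]
end

section
/- The number of tilings of a 4×6 rectangle by right trominoes is 18. -/
/-- The right tromino and its rotations. -/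
def Rshapes : Finset (Finset (ℤ × ℤ)) :=
  rotationsOf {((0, 0) : ℤ × ℤ), (1, 0), (0, 1)}

section ExactCover

variable {α : Type*} [DecidableEq α]

def IsExactCover (pieces : Finset (Finset α)) (R : Finset α) (T : Finset (Finset α)) : Prop :=
  T ⊆ pieces ∧ (T : Set (Finset α)).PairwiseDisjoint id ∧ T.biUnion id = R

def exactCovers (pieces : Finset (Finset α)) : List α → Finset α → Finset (Finset (Finset α))
  | [], _ => {∅} -- the region is kept inside `cells`, so it is empty here
  | c :: cs, R =>
    if c ∈ R then
      (pieces.filter fun P => c ∈ P ∧ P ⊆ R).biUnion fun P =>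
        (exactCovers pieces cs (R \ P)).image (insert P)
    else exactCovers pieces cs R

variable {pieces : Finset (Finset α)}

theorem isExactCover_empty_iff (hpieces : ∅ ∉ pieces) {T : Finset (Finset α)} :
    IsExactCover pieces ∅ T ↔ T = ∅ := by
  refine ⟨fun ⟨hT, _, hcover⟩ => ?_, fun h => by simp [h, IsExactCover]⟩
  refine Finset.eq_empty_of_forall_notMem fun P hP => hpieces ?_
  rw [← Finset.subset_empty.1 (hcover ▸ Finset.subset_biUnion_of_mem id hP)]
  exact hT hP

theorem IsExactCover.subset_of_mem {R : Finset α} {T : Finset (Finset α)}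
    (hT : IsExactCover pieces R T) {P : Finset α} (hP : P ∈ T) : P ⊆ R :=
  hT.2.2 ▸ Finset.subset_biUnion_of_mem id hP

theorem isExactCover_insert_iff {R P : Finset α} {T : Finset (Finset α)} (hP : P ∈ pieces)
    (hPR : P ⊆ R) (hPT : P ∉ T) :
    IsExactCover pieces R (insert P T) ↔ IsExactCover pieces (R \ P) T := by
  simp only [IsExactCover, Finset.insert_subset_iff, hP, true_and, Finset.coe_insert,
    Set.pairwiseDisjoint_insert_of_notMem (Finset.mem_coe.not.2 hPT), Finset.biUnion_insert, id]
  constructor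
  · rintro ⟨hT, ⟨hdisj, hPdisj⟩, hcover⟩
    refine ⟨hT, hdisj, ?_⟩
    rw [← hcover]
    exact (Finset.union_sdiff_cancel_left ((Finset.disjoint_biUnion_right _ _ id).2 hPdisj)).symm
  · rintro ⟨hT, hdisj, hcover⟩
    refine ⟨hT, ⟨hdisj, fun Q hQ => ?_⟩, ?_⟩
    · exact Finset.disjoint_of_subset_right (hcover ▸ Finset.subset_biUnion_of_mem id hQ)
        Finset.disjoint_sdiff
    · rw [hcover, Finset.union_sdiff_of_subset hPR]

theorem mem_exactCovers_iff (hpieces : ∅ ∉ pieces) :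
    ∀ (cells : List α) (R : Finset α), (∀ x ∈ R, x ∈ cells) →
      ∀ T, T ∈ exactCovers pieces cells R ↔ IsExactCover pieces R T
  | [], R, hR, T => by
    obtain rfl : R = ∅ := Finset.eq_empty_of_forall_notMem fun x hx => by simpa using hR x hx
    simp [exactCovers, isExactCover_empty_iff hpieces]
  | c :: cs, R, hR, T => by
    have htail : ∀ S ⊆ R, c ∉ S → ∀ x ∈ S, x ∈ cs := fun S hSR hcS x hx =>
      (List.mem_cons.1 (hR x (hSR hx))).resolve_left (by rintro rfl; exact hcS hx)
    by_cases hc : c ∈ R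
    · have hrest : ∀ P, c ∈ P → ∀ x ∈ R \ P, x ∈ cs := fun P hcP =>
        htail _ Finset.sdiff_subset fun h => (Finset.mem_sdiff.1 h).2 hcP
      simp only [exactCovers, if_pos hc, Finset.mem_biUnion, Finset.mem_filter, Finset.mem_image]
      constructor
      · rintro ⟨P, ⟨hP, hcP, hPR⟩, T', hT', rfl⟩
        rw [mem_exactCovers_iff hpieces cs _ (hrest P hcP)] at hT'
        have hPT' : P ∉ T' := fun h =>
          (Finset.mem_sdiff.1 (hT'.subset_of_mem h hcP)).2 hcP
        exact (isExactCover_insert_iff hP hPR hPT').2 hT'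
      · intro hT
        obtain ⟨P, hPT, hcP⟩ := Finset.mem_biUnion.1 (hT.2.2 ▸ hc)
        have hPR := hT.subset_of_mem hPT
        refine ⟨P, ⟨hT.1 hPT, hcP, hPR⟩, T.erase P, ?_, Finset.insert_erase hPT⟩
        rw [mem_exactCovers_iff hpieces cs _ (hrest P hcP),
          ← isExactCover_insert_iff (hT.1 hPT) hPR (Finset.notMem_erase P T),
          Finset.insert_erase hPT]
        exact hT
    · simp only [exactCovers, if_neg hc]
      exact mem_exactCovers_iff hpieces cs R (htail R subset_rfl hc) T

end ExactCover

section Tiling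

def placements (shapes : Finset (Finset (ℤ × ℤ))) (R : Finset (ℤ × ℤ)) :
    Finset (Finset (ℤ × ℤ)) :=
  R.biUnion fun v => shapes.image (translateBy v)

variable {shapes : Finset (Finset (ℤ × ℤ))} {R : Finset (ℤ × ℤ)}

theorem mem_translateBy_self {s : Finset (ℤ × ℤ)} (hs : (0, 0) ∈ s) (v : ℤ × ℤ) :
    v ∈ translateBy v s :=
  Finset.mem_image.2 ⟨(0, 0), hs, by simp⟩

theorem empty_notMem_placements (h0 : ∀ s ∈ shapes, (0, 0) ∈ s) : ∅ ∉ placements shapes R := by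
  simp only [placements, Finset.mem_biUnion, Finset.mem_image, not_exists, not_and]
  intro v _ s hs hempty
  simpa [hempty] using mem_translateBy_self (h0 s hs) v

theorem isTiling_iff_isExactCover (h0 : ∀ s ∈ shapes, (0, 0) ∈ s)
    {T : Finset (Finset (ℤ × ℤ))} :
    IsTiling shapes R T ↔ IsExactCover (placements shapes R) R T := by
  refine ⟨fun ⟨hshape, hdisj, hcover⟩ => ⟨fun P hP => ?_, hdisj, hcover⟩,
    fun ⟨hplace, hdisj, hcover⟩ => ⟨fun P hP => ?_, hdisj, hcover⟩⟩
  · obtain ⟨s, hs, v, rfl⟩ := hshape P hP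
    have hPR : translateBy v s ⊆ R := hcover ▸ Finset.subset_biUnion_of_mem id hP
    exact Finset.mem_biUnion.2 ⟨v, hPR (mem_translateBy_self (h0 s hs) v),
      Finset.mem_image_of_mem _ hs⟩
  · obtain ⟨v, -, s, hs, rfl⟩ := by
      simpa only [placements, Finset.mem_biUnion, Finset.mem_image] using hplace hP
    exact ⟨s, hs, v, rfl⟩

theorem setOf_isTiling_eq_exactCovers (h0 : ∀ s ∈ shapes, (0, 0) ∈ s) (cells : List (ℤ × ℤ))
    (hcells : ∀ x ∈ R, x ∈ cells) :
    {T | IsTiling shapes R T} = ↑(exactCovers (placements shapes R) cells R) := by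
  ext T
  exact (isTiling_iff_isExactCover h0).trans
    (mem_exactCovers_iff (empty_notMem_placements h0) cells R hcells T).symm

end Tiling

def rectCells (w h : ℕ) : List (ℤ × ℤ) :=
  (List.range h).flatMap fun y : ℕ => (List.range w).map fun x : ℕ => ((x : ℤ), (y : ℤ))

theorem mem_rectCells {w h : ℕ} {p : ℤ × ℤ} (hp : p ∈ Rect w h) : p ∈ rectCells w h := by
  obtain ⟨⟨hx0, hxw⟩, hy0, hyh⟩ := by simpa [Rect] using hp
  simp only [rectCells, List.mem_flatMap, List.mem_range, List.mem_map]
  exact ⟨p.2.toNat, by omega, p.1.toNat, by omega, by ext <;> simp [hx0, hy0]⟩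

set_option maxRecDepth 100000 in
/-- the number of tilings of a 4×6 rectangle by right trominoes is 18. -/
theorem right_tromino_4x6_count :
    {T | IsTiling Rshapes (Rect 6 4) T}.ncard = 18 := by
  have h0 : ∀ s ∈ Rshapes, ((0, 0) : ℤ × ℤ) ∈ s := by decide
  rw [setOf_isTiling_eq_exactCovers h0 (rectCells 6 4) fun _ => mem_rectCells,
    Set.ncard_coe_finset]
  decide
end

section
/- The largest real root λ of x³ − 10x² + 22x + 4 = 0 equals (2/3)(5 + √34·cos(θ/3)), where θ ∈ (π/2, π) satisfies tan θ = −(3/11)·√(519/2). -/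
/-- the largest real root of x³ − 10x² + 22x + 4 is
(2/3)(5 + √34·cos(θ/3)), where θ ∈ (π/2, π) and tan θ = −(3/11)√(519/2). -/
theorem largest_root_cubic_tromino (θ : ℝ)
    (hθ : θ ∈ Set.Ioo (Real.pi / 2) Real.pi)
    (htan : Real.tan θ = -(3 / 11) * Real.sqrt (519 / 2)) :
    let l : ℝ := (2 / 3) * (5 + Real.sqrt 34 * Real.cos (θ / 3))
    l ^ 3 - 10 * l ^ 2 + 22 * l + 4 = 0 ∧
    ∀ x : ℝ, x ^ 3 - 10 * x ^ 2 + 22 * x + 4 = 0 → x ≤ l := by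
  obtain ⟨h1, h2⟩ := hθ
  intro l
  have hl : l = 2 / 3 * (5 + Real.sqrt 34 * Real.cos (θ / 3)) := rfl
  clear_value l
  set s := Real.sqrt 34 with hs_def
  set c := Real.cos (θ / 3) with hc_def
  have hs2 : s ^ 2 = 34 := Real.sq_sqrt (by norm_num)
  have hs5 : (5 : ℝ) < s := by
    rw [hs_def]
    exact (Real.lt_sqrt (by norm_num)).mpr (by norm_num)
  have hpi := Real.pi_pos
  -- cos θ < 0
  have hcos_neg : Real.cos θ < 0 :=
    Real.cos_neg_of_pi_div_two_lt_of_lt h1 (by linarith)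
  have hcos_ne : Real.cos θ ≠ 0 := ne_of_lt hcos_neg
  have hsin : Real.sin θ = Real.tan θ * Real.cos θ := by
    rw [Real.tan_eq_sin_div_cos]; field_simp
  have hpyth := Real.sin_sq_add_cos_sq θ
  have h519 : Real.sqrt (519 / 2) ^ 2 = 519 / 2 := Real.sq_sqrt (by norm_num)
  have htan2 : Real.tan θ ^ 2 = 4671 / 242 := by
    rw [htan, mul_pow, h519]; norm_num
  have hsin2 : Real.sin θ ^ 2 = (4671 / 242) * Real.cos θ ^ 2 := by
    rw [hsin, mul_pow, htan2]
  have hcos_sq : Real.cos θ ^ 2 = 242 / 4913 := by linarith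
  have hsq : (11 * s / 289) ^ 2 = 242 / 4913 := by
    rw [div_pow, mul_pow, hs2]; norm_num
  have hcosθ : Real.cos θ = -11 * s / 289 := by
    have hfac : (Real.cos θ - (-11 * s / 289)) * (Real.cos θ + (-11 * s / 289)) = 0 := by
      linear_combination hcos_sq - hsq
    rcases mul_eq_zero.mp hfac with h | h
    · linarith
    · exfalso
      have hspos : (0 : ℝ) < s := by linarith
      nlinarith
  -- triple angle
  have htriple : Real.cos θ = 4 * c ^ 3 - 3 * c := by
    have h3 := Real.cos_three_mul (θ / 3)
    rw [show 3 * (θ / 3) = θ by ring] at h3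
    rw [h3]
  have hc : 4 * c ^ 3 - 3 * c = -11 * s / 289 := by
    rw [← htriple, hcosθ]
  -- c > 1/2
  have hc_half : 1 / 2 < c := by
    have hlt : Real.cos (Real.pi / 3) < Real.cos (θ / 3) :=
      Real.cos_lt_cos_of_nonneg_of_le_pi (by linarith) (by linarith) (by linarith)
    rw [Real.cos_pi_div_three] at hlt
    exact hlt
  -- the root equation
  have hroot : l ^ 3 - 10 * l ^ 2 + 22 * l + 4 = 0 := by
    rw [hl]
    linear_combination (6 * s * c / 27 - 22 * (s ^ 2 + 34) / 7803) * hs2 +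
      (2 * s ^ 3 / 27) * hc
  refine ⟨hroot, ?_⟩
  intro x hx
  by_contra hxl
  push_neg at hxl
  have hlg : (10 + s) / 3 < l := by
    rw [hl]; nlinarith
  have hQl : 0 < 3 * l ^ 2 - 20 * l + 22 := by
    nlinarith [mul_pos (show (0:ℝ) < 3 * l - 10 - s by linarith)
      (show (0:ℝ) < 3 * l - 10 + s by linarith)]
  have hQ : 0 < x ^ 2 + x * l + l ^ 2 - 10 * x - 10 * l + 22 := by
    have hid : x ^ 2 + x * l + l ^ 2 - 10 * x - 10 * l + 22 =
        (3 * l ^ 2 - 20 * l + 22) + (x - l) * (x + 2 * l - 10) := by ring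
    have hm := mul_pos (sub_pos.mpr hxl) (show (0:ℝ) < x + 2 * l - 10 by linarith)
    rw [hid]; linarith
  have hfac : (x - l) * (x ^ 2 + x * l + l ^ 2 - 10 * x - 10 * l + 22) = 0 := by
    linear_combination hx - hroot
  have hpos := mul_pos (sub_pos.mpr hxl) hQ
  linarith
end
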